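/- arXiv:2101.02025 — 11 statements merged into one kernel-verified Lean document; each statement's English description precedes it below -/
import Mathlib

section
/- Let C, D, E, F, k, n, l, m be elements of a commutative ring such that the polynomial identity x⁵ + C·x³ + D·x² + E·x + F = (x² − k·x + n)·(x³ + k·x² + l·x + m) holds (equivalently, C = l + n − k², D = n·k − l·k + m, E = n·l − k·m, F = m·n). Then n·(5k³ + C·k − D) = 2·(k⁵ + C·k³ + D·k² + E·k) − F. -/
open Polynomial in
theorem milanez_eq7 {R : Type*} [CommRing R] (c d e f k n l m : R)
    (h : (X ^ 5 + C c * X ^ 3 + C d * X ^ 2 + C e * X + C f : R[X])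
        = (X ^ 2 - C k * X + C n) * (X ^ 3 + C k * X ^ 2 + C l * X + C m)) :
    n * (5 * k ^ 3 + c * k - d) = 2 * (k ^ 5 + c * k ^ 3 + d * k ^ 2 + e * k) - f := by
  have h0 := congrArg (fun p => Polynomial.coeff p 0) h
  have h1 := congrArg (fun p => Polynomial.coeff p 1) h
  have h2 := congrArg (fun p => Polynomial.coeff p 2) h
  have h3 := congrArg (fun p => Polynomial.coeff p 3) h
  simp only [coeff_mul, Finset.Nat.sum_antidiagonal_eq_sum_range_succ_mk,
    Finset.sum_range_succ, Finset.sum_range_zero, coeff_add, coeff_sub, coeff_C_mul,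
    coeff_X_pow, coeff_C, coeff_X] at h0 h1 h2 h3
  norm_num at h0 h1 h2 h3
  subst h0 h1 h2 h3
  ring
end

section
/- Let C, D, E, F, k, n, l, m be elements of a commutative ring such that the polynomial identity x⁵ + C·x³ + D·x² + E·x + F = (x² − k·x + n)·(x³ + k·x² + l·x + m) holds. Then k is a root of Martinelli's polynomial, i.e. (2·(k⁵ + C·k³ + D·k² + E·k) − F)·(13k⁵ + 6C·k³ − 5D·k² + (C² − 2E)·k + F − D·C) − (k⁴ + C·k² + D·k + E)·(5k³ + C·k − D)² = 0. -/
set_option maxRecDepth 8000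

open Polynomial in
theorem martinelli_root {R : Type*} [CommRing R] (c d e f k n l m : R)
    (h : (X ^ 5 + C c * X ^ 3 + C d * X ^ 2 + C e * X + C f : R[X])
        = (X ^ 2 - C k * X + C n) * (X ^ 3 + C k * X ^ 2 + C l * X + C m)) :
    (2 * (k ^ 5 + c * k ^ 3 + d * k ^ 2 + e * k) - f)
      * (13 * k ^ 5 + 6 * c * k ^ 3 - 5 * d * k ^ 2 + (c ^ 2 - 2 * e) * k + f - d * c)
    - (k ^ 4 + c * k ^ 2 + d * k + e) * (5 * k ^ 3 + c * k - d) ^ 2 = 0 := by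
  ring_nf at h
  have h3 := Polynomial.ext_iff.mp h 3
  have h2 := Polynomial.ext_iff.mp h 2
  have h1 := Polynomial.ext_iff.mp h 1
  have h0 := Polynomial.ext_iff.mp h 0
  simp [coeff_one] at h3 h2 h1 h0
  simp only [mul_assoc, ← C_pow, coeff_mul_C, coeff_C_mul, coeff_X_pow] at h3 h2 h1
  norm_num at h3 h2 h1
  subst h0 h1 h2 h3; ring
end

section
/- Let r₁, r₂, r₃, r₄, r₅ and C, D, E, F be complex numbers such that (x − r₁)(x − r₂)(x − r₃)(x − r₄)(x − r₅) = x⁵ + C·x³ + D·x² + E·x + F as polynomials over ℂ. Then k = r₁ + r₂ (the sum of any two of the roots) satisfies Martinelli's equation: (2·(k⁵ + C·k³ + D·k² + E·k) − F)·(13k⁵ + 6C·k³ − 5D·k² + (C² − 2E)·k + F − D·C) − (k⁴ + C·k² + D·k + E)·(5k³ + C·k − D)² = 0. -/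
set_option maxRecDepth 8000 in
open Polynomial in
theorem martinelli_sum_of_two_roots (r₁ r₂ r₃ r₄ r₅ c d e f k : ℂ)
    (h : ((X - C r₁) * (X - C r₂) * (X - C r₃) * (X - C r₄) * (X - C r₅) : ℂ[X])
        = X ^ 5 + C c * X ^ 3 + C d * X ^ 2 + C e * X + C f)
    (hk : k = r₁ + r₂) :
    (2 * (k ^ 5 + c * k ^ 3 + d * k ^ 2 + e * k) - f)
      * (13 * k ^ 5 + 6 * c * k ^ 3 - 5 * d * k ^ 2 + (c ^ 2 - 2 * e) * k + f - d * c)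
    - (k ^ 4 + c * k ^ 2 + d * k + e) * (5 * k ^ 3 + c * k - d) ^ 2 = 0 := by
  ring_nf at h
  have h4 := congrArg (fun p => Polynomial.coeff p 4) h
  have h3 := congrArg (fun p => Polynomial.coeff p 3) h
  have h2 := congrArg (fun p => Polynomial.coeff p 2) h
  have h1 := congrArg (fun p => Polynomial.coeff p 1) h
  have h0 := congrArg (fun p => Polynomial.coeff p 0) h
  simp [coeff_mul_X_pow', coeff_mul_C, coeff_C, coeff_X_pow, coeff_X] at h4 h3 h2 h1 h0
  have hr5 : r₅ = -r₁ - r₂ - r₃ - r₄ := by linear_combination -h4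
  subst hk hr5 h3 h2 h1 h0
  ring
end

section
/- Let a, b, c, d be elements of a commutative ring and set C = −a² + c + b, D = ab + d − ac, E = bc − ad, F = bd. Then for every k, k¹⁰ + 3C·k⁸ + D·k⁷ + (3C² − 3E)·k⁶ + (2DC − 11F)·k⁵ + (C³ − D² − 2CE)·k⁴ + (DC² − 4DE − 4CF)·k³ + (7DF − CD² − 4E² + EC²)·k² + (4EF − FC² − D³)·k − F² + FDC − D²E = (k⁴ + a·k³ + (c − a²)·k² + (−a³ − d)·k + (ad − a²c)) · (k⁶ − a·k⁵ + (−a² + 3b + 2c)·k⁴ + (a³ − 2ab − 2ac + 2d)·k³ + (−a²b + c² + 3b² − ad)·k² + (−ac² − ab² + a²d + 2abc − 6bd + 2dc)·k + (abd − acd − 2b²c + d² + b³ + bc²)). -/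
theorem martinelli_splits {R : Type*} [CommRing R] (a b c d C D E F : R)
    (hC : C = -a ^ 2 + c + b) (hD : D = a * b + d - a * c)
    (hE : E = b * c - a * d) (hF : F = b * d) :
    ∀ k : R,
      k ^ 10 + 3 * C * k ^ 8 + D * k ^ 7 + (3 * C ^ 2 - 3 * E) * k ^ 6
        + (2 * D * C - 11 * F) * k ^ 5 + (C ^ 3 - D ^ 2 - 2 * C * E) * k ^ 4
        + (D * C ^ 2 - 4 * D * E - 4 * C * F) * k ^ 3
        + (7 * D * F - C * D ^ 2 - 4 * E ^ 2 + E * C ^ 2) * k ^ 2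
        + (4 * E * F - F * C ^ 2 - D ^ 3) * k
        - F ^ 2 + F * D * C - D ^ 2 * E
      = (k ^ 4 + a * k ^ 3 + (c - a ^ 2) * k ^ 2 + (-a ^ 3 - d) * k + (a * d - a ^ 2 * c))
        * (k ^ 6 + (-a) * k ^ 5 + (-a ^ 2 + 3 * b + 2 * c) * k ^ 4
          + (a ^ 3 - 2 * a * b - 2 * a * c + 2 * d) * k ^ 3
          + (-a ^ 2 * b + c ^ 2 + 3 * b ^ 2 - a * d) * k ^ 2
          + (-a * c ^ 2 - a * b ^ 2 + a ^ 2 * d + 2 * a * b * c - 6 * b * d + 2 * d * c) * k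
          + (a * b * d - a * c * d - 2 * b ^ 2 * c + d ^ 2 + b ^ 3 + b * c ^ 2)) := by subst hC hD hE hF; intro k; ring
end

section
/- Let a, b, c, d, s, t be elements of a commutative ring (e.g. complex numbers) with s² − a·s + b = 0 and t³ + a·t² + c·t + d = 0. Then k = s + t satisfies k⁶ − a·k⁵ + (−a² + 3b + 2c)·k⁴ + (a³ − 2ab − 2ac + 2d)·k³ + (−a²b + c² + 3b² − ad)·k² + (−ac² − ab² + a²d + 2abc − 6bd + 2dc)·k + (abd − acd − 2b²c + d² + b³ + bc²) = 0. -/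
theorem milanez_sextic_root {R : Type*} [CommRing R] (a b c d s t k : R)
    (hs : s ^ 2 - a * s + b = 0) (ht : t ^ 3 + a * t ^ 2 + c * t + d = 0)
    (hk : k = s + t) :
    k ^ 6 - a * k ^ 5 + (-a ^ 2 + 3 * b + 2 * c) * k ^ 4
      + (a ^ 3 - 2 * a * b - 2 * a * c + 2 * d) * k ^ 3
      + (-a ^ 2 * b + c ^ 2 + 3 * b ^ 2 - a * d) * k ^ 2
      + (-a * c ^ 2 - a * b ^ 2 + a ^ 2 * d + 2 * a * b * c - 6 * b * d + 2 * d * c) * k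
      + (a * b * d - a * c * d - 2 * b ^ 2 * c + d ^ 2 + b ^ 3 + b * c ^ 2) = 0 := by
  subst hk
  linear_combination
    (15*t^4 + 20*s*t^3 + 15*s^2*t^2 + 6*s^3*t + s^4 + 6*d*t + 2*d*s + 12*c*t^2
      + 8*c*s*t + 2*c*s^2 + c^2 + 3*b*t^2 + 6*b*s*t + 2*b*s^2 - 2*b*c + b^2
      + 10*a*t^3 + 5*a*s*t^2 + a*s^2*t + a*d + 2*a*c*t - a*b*t - a^2*t^2
      - 3*a^2*s*t - a^2*s^2) * hs
    + (t^3 + 6*s*t^2 + d + c*t + 2*c*s - 12*b*t - 8*b*s - 2*a*t^2 + 4*a*s*t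
      - a*c + a^2*t + 2*a^2*s) * ht
end

section
/- Let a, b, c, d, s₁, s₂, t₁, t₂, t₃ be complex numbers with (x − s₁)(x − s₂) = x² − a·x + b and (x − t₁)(x − t₂)(x − t₃) = x³ + a·x² + c·x + d as polynomial identities. Then, as polynomials in X, ∏_{i ∈ {1,2}} ∏_{j ∈ {1,2,3}} (X − (sᵢ + tⱼ)) = X⁶ − a·X⁵ + (−a² + 3b + 2c)·X⁴ + (a³ − 2ab − 2ac + 2d)·X³ + (−a²b + c² + 3b² − ad)·X² + (−ac² − ab² + a²d + 2abc − 6bd + 2dc)·X + (abd − acd − 2b²c + d² + b³ + bc²). -/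
set_option maxHeartbeats 1000000


open Polynomial in
theorem milanez_sextic_roots_prod (a b c d s₁ s₂ t₁ t₂ t₃ : ℂ)
    (hq : ((X - C s₁) * (X - C s₂) : ℂ[X]) = X ^ 2 - C a * X + C b)
    (hc : ((X - C t₁) * (X - C t₂) * (X - C t₃) : ℂ[X])
        = X ^ 3 + C a * X ^ 2 + C c * X + C d) :
    ((X - C (s₁ + t₁)) * (X - C (s₁ + t₂)) * (X - C (s₁ + t₃))
      * (X - C (s₂ + t₁)) * (X - C (s₂ + t₂)) * (X - C (s₂ + t₃)) : ℂ[X])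
    = X ^ 6 - C a * X ^ 5 + C (-a ^ 2 + 3 * b + 2 * c) * X ^ 4
      + C (a ^ 3 - 2 * a * b - 2 * a * c + 2 * d) * X ^ 3
      + C (-a ^ 2 * b + c ^ 2 + 3 * b ^ 2 - a * d) * X ^ 2
      + C (-a * c ^ 2 - a * b ^ 2 + a ^ 2 * d + 2 * a * b * c - 6 * b * d + 2 * d * c) * X
      + C (a * b * d - a * c * d - 2 * b ^ 2 * c + d ^ 2 + b ^ 3 + b * c ^ 2) := by
  have hq' : ((X ^ 2 - C (s₁ + s₂) * X + C (s₁ * s₂)) : ℂ[X])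
      = X ^ 2 - C a * X + C b := by
    rw [← hq]; push_cast [C_add, C_mul]; ring
  have hc' : ((X ^ 3 - C (t₁ + t₂ + t₃) * X ^ 2 + C (t₁ * t₂ + t₁ * t₃ + t₂ * t₃) * X
      - C (t₁ * t₂ * t₃)) : ℂ[X]) = X ^ 3 + C a * X ^ 2 + C c * X + C d := by
    rw [← hc]; push_cast [C_add, C_mul]; ring
  have ha : s₁ + s₂ = a := by
    have := congrArg (fun p => Polynomial.coeff p 1) hq'
    simp [add_mul, coeff_C_mul, coeff_X_pow] at this; linear_combination -this
  have hb : s₁ * s₂ = b := by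
    have := congrArg (fun p => Polynomial.coeff p 0) hq'
    simpa using this
  have hA : t₁ + t₂ + t₃ = -a := by
    have := congrArg (fun p => Polynomial.coeff p 2) hc'
    simp [add_mul, coeff_C_mul, coeff_X_pow] at this; linear_combination -this
  have hC : t₁ * t₂ + t₁ * t₃ + t₂ * t₃ = c := by
    have := congrArg (fun p => Polynomial.coeff p 1) hc'
    simp [add_mul, coeff_C_mul, coeff_X_pow] at this; linear_combination this
  have hD : t₁ * t₂ * t₃ = -d := by
    have := congrArg (fun p => Polynomial.coeff p 0) hc'
    simp [add_mul, coeff_C_mul, coeff_X_pow] at this; linear_combination -this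
  have ht₃ : t₃ = -a - t₁ - t₂ := by linear_combination hA
  subst ha hb ht₃
  have hc1 : c = t₁ * t₂ + t₁ * (-(s₁ + s₂) - t₁ - t₂) + t₂ * (-(s₁ + s₂) - t₁ - t₂) := by
    linear_combination -hC
  have hd1 : d = -(t₁ * t₂ * (-(s₁ + s₂) - t₁ - t₂)) := by linear_combination hD
  subst hc1 hd1
  simp only [map_add, map_mul, map_sub, map_neg, map_pow, map_ofNat]
  ring
end

section
/- Let a, b, c, d be complex numbers. A complex number z satisfies z⁶ − a·z⁵ + (−a² + 3b + 2c)·z⁴ + (a³ − 2ab − 2ac + 2d)·z³ + (−a²b + c² + 3b² − ad)·z² + (−ac² − ab² + a²d + 2abc − 6bd + 2dc)·z + (abd − acd − 2b²c + d² + b³ + bc²) = 0 if and only if there exist complex numbers s and t with s² − a·s + b = 0, t³ + a·t² + c·t + d = 0, and z = s + t. -/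
open Polynomial

lemma exists_quad_root (p q : ℂ) : ∃ x : ℂ, x ^ 2 + p * x + q = 0 := by
  have hdeg : (0 : WithBot ℕ) <
      (C (1:ℂ) * X ^ 2 + C p * X + C q).degree := by
    rw [Polynomial.degree_quadratic one_ne_zero]; norm_num
  obtain ⟨x, hx⟩ := Complex.exists_root hdeg
  refine ⟨x, ?_⟩
  have := hx
  simp [Polynomial.IsRoot, Polynomial.eval_add, Polynomial.eval_mul] at this
  linear_combination this

lemma exists_cubic_root (p q r : ℂ) : ∃ x : ℂ, x ^ 3 + p * x ^ 2 + q * x + r = 0 := by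
  have hdeg : (0 : WithBot ℕ) <
      (C (1:ℂ) * X ^ 3 + C p * X ^ 2 + C q * X + C r).degree := by
    rw [Polynomial.degree_cubic one_ne_zero]; norm_num
  obtain ⟨x, hx⟩ := Complex.exists_root hdeg
  refine ⟨x, ?_⟩
  have := hx
  simp [Polynomial.IsRoot, Polynomial.eval_add, Polynomial.eval_mul] at this
  linear_combination this

lemma milanez_key (a b c d z t1 t2 t3 : ℂ) (h1 : a = -(t1 + t2 + t3))
    (h2 : c = t1 * t2 + t1 * t3 + t2 * t3) (h3 : d = -(t1 * t2 * t3)) :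
    z ^ 6 - a * z ^ 5 + (-a ^ 2 + 3 * b + 2 * c) * z ^ 4
      + (a ^ 3 - 2 * a * b - 2 * a * c + 2 * d) * z ^ 3
      + (-a ^ 2 * b + c ^ 2 + 3 * b ^ 2 - a * d) * z ^ 2
      + (-a * c ^ 2 - a * b ^ 2 + a ^ 2 * d + 2 * a * b * c - 6 * b * d + 2 * d * c) * z
      + (a * b * d - a * c * d - 2 * b ^ 2 * c + d ^ 2 + b ^ 3 + b * c ^ 2)
    = ((z - t1) ^ 2 - a * (z - t1) + b) * ((z - t2) ^ 2 - a * (z - t2) + b)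
        * ((z - t3) ^ 2 - a * (z - t3) + b) := by
  subst h1 h2 h3; ring

theorem milanez_sextic_roots_iff (a b c d z : ℂ) :
    z ^ 6 - a * z ^ 5 + (-a ^ 2 + 3 * b + 2 * c) * z ^ 4
      + (a ^ 3 - 2 * a * b - 2 * a * c + 2 * d) * z ^ 3
      + (-a ^ 2 * b + c ^ 2 + 3 * b ^ 2 - a * d) * z ^ 2
      + (-a * c ^ 2 - a * b ^ 2 + a ^ 2 * d + 2 * a * b * c - 6 * b * d + 2 * d * c) * z
      + (a * b * d - a * c * d - 2 * b ^ 2 * c + d ^ 2 + b ^ 3 + b * c ^ 2) = 0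
    ↔ ∃ s t : ℂ, s ^ 2 - a * s + b = 0 ∧ t ^ 3 + a * t ^ 2 + c * t + d = 0
        ∧ z = s + t := by
  constructor
  · intro hz
    obtain ⟨t1, ht1⟩ := exists_cubic_root a c d
    obtain ⟨t2, ht2⟩ := exists_quad_root (a + t1) (c + a * t1 + t1 ^ 2)
    set t3 : ℂ := -(a + t1) - t2 with ht3def
    have h1 : a = -(t1 + t2 + t3) := by rw [ht3def]; ring
    have h2 : c = t1 * t2 + t1 * t3 + t2 * t3 := by
      rw [ht3def]; linear_combination ht2
    have h3 : d = -(t1 * t2 * t3) := by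
      rw [ht3def]; linear_combination ht1 - t1 * ht2
    have key := milanez_key a b c d z t1 t2 t3 h1 h2 h3
    rw [key] at hz
    have hct2 : t2 ^ 3 + a * t2 ^ 2 + c * t2 + d = 0 := by
      linear_combination (t2 - t1) * ht2 + ht1
    have hct3 : t3 ^ 3 + a * t3 ^ 2 + c * t3 + d = 0 := by
      rw [ht3def]; linear_combination (-(a + t1) - t2 - t1) * ht2 + ht1
    rcases mul_eq_zero.mp hz with h | h
    · rcases mul_eq_zero.mp h with h' | h'
      · exact ⟨z - t1, t1, by linear_combination h', ht1, by ring⟩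
      · exact ⟨z - t2, t2, by linear_combination h', hct2, by ring⟩
    · exact ⟨z - t3, t3, by linear_combination h, hct3, by ring⟩
  · rintro ⟨s, t, hs, ht, rfl⟩
    obtain ⟨t2, ht2⟩ := exists_quad_root (a + t) (c + a * t + t ^ 2)
    set t3 : ℂ := -(a + t) - t2 with ht3def
    have h1 : a = -(t + t2 + t3) := by rw [ht3def]; ring
    have h2 : c = t * t2 + t * t3 + t2 * t3 := by
      rw [ht3def]; linear_combination ht2
    have h3 : d = -(t * t2 * t3) := by
      rw [ht3def]; linear_combination ht - t * ht2
    rw [milanez_key a b c d (s + t) t t2 t3 h1 h2 h3]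
    have : (s + t - t) ^ 2 - a * (s + t - t) + b = 0 := by linear_combination hs
    rw [this, zero_mul, zero_mul]
end

section
/- Let a, c, d be elements of a commutative ring and let Q(k) = k⁴ + a·k³ + (c − a²)·k² + (−a³ − d)·k + (ad − a²c). Then (i) Q(a) = 0, and (ii) for every t with t³ + a·t² + c·t + d = 0, one has Q(−a − t) = 0. -/
theorem quartic_factor_roots {R : Type*} [CommRing R] (a c d : R) :
    (a ^ 4 + a * a ^ 3 + (c - a ^ 2) * a ^ 2 + (-a ^ 3 - d) * a + (a * d - a ^ 2 * c) = 0)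
    ∧ ∀ t : R, t ^ 3 + a * t ^ 2 + c * t + d = 0 →
        (-a - t) ^ 4 + a * (-a - t) ^ 3 + (c - a ^ 2) * (-a - t) ^ 2
          + (-a ^ 3 - d) * (-a - t) + (a * d - a ^ 2 * c) = 0 := by
  refine ⟨by ring, fun t ht => ?_⟩
  linear_combination (2 * a + t) * ht
end

section
/- A complex number z satisfies z⁶ + 2z³ + 21z² − 18z + 51 = 0 if and only if (z − √2·i)³ − 3(z − √2·i) + 1 = 0 or (z + √2·i)³ − 3(z + √2·i) + 1 = 0, where i is the imaginary unit and √2 is the positive real square root of 2. -/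
theorem example_sextic_roots_iff (z : ℂ) :
    z ^ 6 + 2 * z ^ 3 + 21 * z ^ 2 - 18 * z + 51 = 0
    ↔ (z - Real.sqrt 2 * Complex.I) ^ 3 - 3 * (z - Real.sqrt 2 * Complex.I) + 1 = 0
      ∨ (z + Real.sqrt 2 * Complex.I) ^ 3 - 3 * (z + Real.sqrt 2 * Complex.I) + 1 = 0 := by
  set s : ℂ := Real.sqrt 2 * Complex.I with hs
  clear_value s
  have h2 : s ^ 2 = -2 := by
    rw [hs, mul_pow, Complex.I_sq]
    norm_cast
    rw [Real.sq_sqrt (by norm_num)]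
    norm_num
  have key : ((z - s) ^ 3 - 3 * (z - s) + 1) * ((z + s) ^ 3 - 3 * (z + s) + 1)
      = z ^ 6 + 2 * z ^ 3 + 21 * z ^ 2 - 18 * z + 51 := by
    have : s ^ 6 = -8 := by
      have : s ^ 6 = (s ^ 2) ^ 3 := by ring
      rw [this, h2]; norm_num
    have h4 : s ^ 4 = 4 := by
      have : s ^ 4 = (s ^ 2) ^ 2 := by ring
      rw [this, h2]; norm_num
    linear_combination (z ^ 4 - 2 * z * s ^ 2 - 3 * z ^ 2 + 2 * z - s ^ 2 + 3 + 8 * z + 3 * z ^ 2 - 4 * z ^ 4 - 10) * h2 + ((- z ^ 2) - 3 + 2 * z + 4 * z ^ 2 + 10) * h4 - this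
  rw [← key, mul_eq_zero]
end

section
/- For every real number x, x³ − 3x + 1 = (x − 2·cos(2π/9))·(x + 2·cos(π/9))·(x − (cos(π/9) − √3·sin(π/9))). -/
theorem cubic_trig_factorization (x : ℝ) :
    x ^ 3 - 3 * x + 1
      = (x - 2 * Real.cos (2 * Real.pi / 9)) * (x + 2 * Real.cos (Real.pi / 9))
        * (x - (Real.cos (Real.pi / 9) - Real.sqrt 3 * Real.sin (Real.pi / 9))) := by
  set c := Real.cos (Real.pi / 9) with hc
  have h1 : 4 * c ^ 3 - 3 * c = 1 / 2 := by
    have := Real.cos_three_mul (Real.pi / 9)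
    rw [show 3 * (Real.pi / 9) = Real.pi / 3 by ring, Real.cos_pi_div_three] at this
    rw [hc]; linarith
  have hA : Real.cos (2 * Real.pi / 9) = 2 * c ^ 2 - 1 := by
    rw [show 2 * Real.pi / 9 = 2 * (Real.pi / 9) by ring, Real.cos_two_mul, hc]
  have hB : Real.cos (2 * Real.pi / 9)
      = c / 2 + Real.sqrt 3 / 2 * Real.sin (Real.pi / 9) := by
    rw [show 2 * Real.pi / 9 = Real.pi / 3 - Real.pi / 9 by ring, Real.cos_sub,
      Real.cos_pi_div_three, Real.sin_pi_div_three, hc]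
    ring
  have hts : Real.sqrt 3 * Real.sin (Real.pi / 9) = 4 * c ^ 2 - c - 2 := by
    rw [hA] at hB; linarith
  rw [hA, hts]
  linear_combination ((4 * c - 2) * x + 8 * c ^ 2 - 4 * c - 2) * h1
end

section
/- The complex number z = 2·cos(2π/9) + √2·i satisfies z⁶ + 2z³ + 21z² − 18z + 51 = 0, and likewise each of the complex numbers 2·cos(2π/9) − √2·i, −2·cos(π/9) + √2·i, −2·cos(π/9) − √2·i, (cos(π/9) − √3·sin(π/9)) + √2·i, and (cos(π/9) − √3·sin(π/9)) − √2·i satisfies the same equation. -/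
lemma key_sextic (a : ℝ) (ha : a ^ 3 = 3 * a - 1) (b : ℂ) (hb : b ^ 2 = -2) :
    ((a : ℂ) + b) ^ 6 + 2 * ((a : ℂ) + b) ^ 3 + 21 * ((a : ℂ) + b) ^ 2
      - 18 * ((a : ℂ) + b) + 51 = 0 := by
  have ha' : (a : ℂ) ^ 3 = 3 * (a : ℂ) - 1 := by exact_mod_cast congrArg (Complex.ofReal ·) ha
  linear_combination ((a:ℂ)^3 + 6*(a:ℂ)^2*b + 15*(a:ℂ)*b^2 + 20*b^3 + 1 + 3*(a:ℂ) + 18*b) * ha'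
    + (15*(a:ℂ)^2*b^2 + 6*(a:ℂ)*b^3 + b^4 - 9*(a:ℂ) - 18*b + 25 + 15*(a:ℂ)^2 + 48*(a:ℂ)*b - 2*b^2) * hb

lemma cube_of_two_cos (θ : ℝ) : (2 * Real.cos θ) ^ 3 = 3 * (2 * Real.cos θ) + 2 * Real.cos (3 * θ) := by
  rw [Real.cos_three_mul]; ring

lemma sqrt2_sq : ((Real.sqrt 2 : ℝ) : ℂ) ^ 2 = 2 := by
  norm_cast
  rw [Real.sq_sqrt]; norm_num

lemma a1 : (2 * Real.cos (2 * Real.pi / 9)) ^ 3 = 3 * (2 * Real.cos (2 * Real.pi / 9)) - 1 := by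
  have := cube_of_two_cos (2 * Real.pi / 9)
  have h3 : 3 * (2 * Real.pi / 9) = 2 * Real.pi / 3 := by ring
  rw [h3] at this
  have hc : Real.cos (2 * Real.pi / 3) = -(1/2) := by
    have h : 2 * Real.pi / 3 = Real.pi - Real.pi / 3 := by ring
    rw [h, Real.cos_pi_sub, Real.cos_pi_div_three]
  rw [hc] at this; linarith

lemma a2 : (-2 * Real.cos (Real.pi / 9)) ^ 3 = 3 * (-2 * Real.cos (Real.pi / 9)) - 1 := by
  have := cube_of_two_cos (Real.pi / 9)
  have h3 : 3 * (Real.pi / 9) = Real.pi / 3 := by ring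
  rw [h3, Real.cos_pi_div_three] at this
  nlinarith [this]

lemma a3eq : Real.cos (Real.pi / 9) - Real.sqrt 3 * Real.sin (Real.pi / 9)
    = 2 * Real.cos (4 * Real.pi / 9) := by
  have h : (4 : ℝ) * Real.pi / 9 = Real.pi / 9 + Real.pi / 3 := by ring
  rw [h, Real.cos_add, Real.cos_pi_div_three, Real.sin_pi_div_three]
  ring

lemma a3 : (Real.cos (Real.pi / 9) - Real.sqrt 3 * Real.sin (Real.pi / 9)) ^ 3
    = 3 * (Real.cos (Real.pi / 9) - Real.sqrt 3 * Real.sin (Real.pi / 9)) - 1 := by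
  rw [a3eq]
  have := cube_of_two_cos (4 * Real.pi / 9)
  have h3 : 3 * (4 * Real.pi / 9) = 4 * Real.pi / 3 := by ring
  rw [h3] at this
  have hc : Real.cos (4 * Real.pi / 3) = -(1/2) := by
    have h : (4 : ℝ) * Real.pi / 3 = Real.pi + Real.pi / 3 := by ring
    rw [h, Real.cos_add, Real.cos_pi, Real.sin_pi, Real.cos_pi_div_three]; ring
  rw [hc] at this
  linarith [this]

lemma hbpos : ((Real.sqrt 2 : ℝ) * Complex.I) ^ 2 = -2 := by
  rw [mul_pow, Complex.I_sq, sqrt2_sq]; ring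

lemma hbneg : (-((Real.sqrt 2 : ℝ) * Complex.I)) ^ 2 = -2 := by
  rw [neg_pow, hbpos]; ring

theorem example_sextic_trig_roots :
    ∀ z : ℂ,
      (z = 2 * Real.cos (2 * Real.pi / 9) + Real.sqrt 2 * Complex.I
        ∨ z = 2 * Real.cos (2 * Real.pi / 9) - Real.sqrt 2 * Complex.I
        ∨ z = -2 * Real.cos (Real.pi / 9) + Real.sqrt 2 * Complex.I
        ∨ z = -2 * Real.cos (Real.pi / 9) - Real.sqrt 2 * Complex.I
        ∨ z = (Real.cos (Real.pi / 9) - Real.sqrt 3 * Real.sin (Real.pi / 9))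
            + Real.sqrt 2 * Complex.I
        ∨ z = (Real.cos (Real.pi / 9) - Real.sqrt 3 * Real.sin (Real.pi / 9))
            - Real.sqrt 2 * Complex.I) →
      z ^ 6 + 2 * z ^ 3 + 21 * z ^ 2 - 18 * z + 51 = 0 := by
  rintro z (rfl | rfl | rfl | rfl | rfl | rfl)
  · have := key_sextic _ a1 _ hbpos
    push_cast at this ⊢; linear_combination this
  · have := key_sextic _ a1 _ hbneg
    push_cast at this ⊢; linear_combination this
  · have := key_sextic _ a2 _ hbpos
    push_cast at this ⊢; linear_combination this
  · have := key_sextic _ a2 _ hbneg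
    push_cast at this ⊢; linear_combination this
  · have := key_sextic _ a3 _ hbpos
    push_cast at this ⊢; linear_combination this
  · have := key_sextic _ a3 _ hbneg
    push_cast at this ⊢; linear_combination this
end
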